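/- Let f : (a,b) → ℝ, with (a,b) ⊂ (0,∞), be a right maximally extended C² solution of f''/(1+(f')²) = (r − (n−1)/r)·f' − f − λ·√(1+(f')²) with f'·f'' < 0 on (a,b). Then b = ∞. -/

import Mathlib

/-!
If `f' f'' < 0` then `f'` has constant sign (Darboux) and `|f'|` decreases, so near `b` both `f`
and `f'` are monotone and bounded and converge to finite limits `L`, `M`. Written as an autonomous
first-order system in `(r, f, f')`, the equation has a vector field that is `C¹` wherever `r ≠ 0`,
so at `(b, L, M)` with `b > 0` Picard–Lindelöf gives a local solution, and backward uniqueness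
glues it to `f`: the solution continues past `b`, against maximality.
-/

/-- `g` is a C² solution of `f''/(1+(f')²) = (r − (n−1)/r)f' − f − λ√(1+(f')²)` on `(a,b)`. -/
def IsProfileSol (n : ℕ) (lam a b : ℝ) (g : ℝ → ℝ) : Prop :=
  (∀ r ∈ Set.Ioo a b, DifferentiableAt ℝ g r ∧ DifferentiableAt ℝ (deriv g) r) ∧
  ∀ r ∈ Set.Ioo a b,
    deriv (deriv g) r / (1 + (deriv g r) ^ 2) =
      (r - ((n : ℝ) - 1) / r) * deriv g r - g r - lam * Real.sqrt (1 + (deriv g r) ^ 2)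

open Set Filter Topology

section Limits

variable {f : ℝ → ℝ} {a b : ℝ}

lemma exists_tendsto_nhdsLT_of_deriv_pos_of_deriv2_neg (hab : a < b)
    (hf : ∀ r ∈ Ioo a b, DifferentiableAt ℝ f r)
    (hf' : ∀ r ∈ Ioo a b, DifferentiableAt ℝ (deriv f) r)
    (hpos : ∀ r ∈ Ioo a b, 0 < deriv f r) (hneg : ∀ r ∈ Ioo a b, deriv (deriv f) r < 0) :
    ∃ L M : ℝ, Tendsto f (𝓝[<] b) (𝓝 L) ∧ Tendsto (deriv f) (𝓝[<] b) (𝓝 M) := by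
  have hfc : ContinuousOn f (Ioo a b) := fun r hr => (hf r hr).continuousAt.continuousWithinAt
  have hf'c : ContinuousOn (deriv f) (Ioo a b) := fun r hr =>
    (hf' r hr).continuousAt.continuousWithinAt
  have hf'anti : AntitoneOn (deriv f) (Ioo a b) :=
    (strictAntiOn_of_deriv_neg (convex_Ioo a b) hf'c (by rwa [interior_Ioo])).antitoneOn
  have hfmono : MonotoneOn f (Ioo a b) :=
    (strictMonoOn_of_deriv_pos (convex_Ioo a b) hfc (by rwa [interior_Ioo])).monotoneOn
  obtain ⟨c, hac, hcb⟩ := exists_between hab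
  have hsub : Ioo c b ⊆ Ioo a b := Ioo_subset_Ioo_left hac.le
  have hne : (Ioo c b).Nonempty := nonempty_Ioo.2 hcb
  -- `f` lies below its tangent line at `c`, since `f' ≤ f' c` to the right of `c`
  have hbdd : ∀ r ∈ Ioo c b, f r ≤ f c + deriv f c * (b - c) := by
    intro r hr
    have hmvt := (convex_Ico c b).image_sub_le_mul_sub_of_deriv_le
      (hfc.mono (Ico_subset_Ioo_left hac)) (by
        rw [interior_Ico]; exact fun x hx => (hf x (hsub hx)).differentiableWithinAt)
      (C := deriv f c) (by
        rw [interior_Ico]; exact fun x hx => hf'anti ⟨hac, hcb⟩ (hsub hx) hx.1.le)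
      c ⟨le_rfl, hcb⟩ r ⟨hr.1.le, hr.2⟩ hr.1.le
    nlinarith [hpos c ⟨hac, hcb⟩, hr.2]
  exact ⟨_, _,
    (hfmono.mono hsub).tendsto_nhdsWithin_Ioo_left hne
      ⟨_, by rintro _ ⟨r, hr, rfl⟩; exact hbdd r hr⟩,
    (hf'anti.mono hsub).tendsto_nhdsWithin_Ioo_left hne
      ⟨0, by rintro _ ⟨r, hr, rfl⟩; exact (hpos r (hsub hr)).le⟩⟩

lemma exists_tendsto_nhdsLT_of_deriv_mul_deriv2_neg (hab : a < b)
    (hf : ∀ r ∈ Ioo a b, DifferentiableAt ℝ f r)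
    (hf' : ∀ r ∈ Ioo a b, DifferentiableAt ℝ (deriv f) r)
    (hsign : ∀ r ∈ Ioo a b, deriv f r * deriv (deriv f) r < 0) :
    ∃ L M : ℝ, Tendsto f (𝓝[<] b) (𝓝 L) ∧ Tendsto (deriv f) (𝓝[<] b) (𝓝 M) := by
  rcases hasDerivWithinAt_forall_lt_or_forall_gt_of_forall_ne (convex_Ioo a b)
    (fun r hr => (hf r hr).hasDerivAt.hasDerivWithinAt) (m := 0)
    (fun r hr h0 => by simpa [h0] using hsign r hr) with hneg | hpos
  · obtain ⟨L, M, hL, hM⟩ := exists_tendsto_nhdsLT_of_deriv_pos_of_deriv2_neg (f := -f) hab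
      (fun r hr => (hf r hr).neg) (fun r hr => by rw [deriv.neg']; exact (hf' r hr).neg)
      (fun r hr => by rw [deriv.neg]; exact neg_pos.2 (hneg r hr))
      (fun r hr => by
        rw [deriv.neg', deriv.fun_neg, neg_lt_zero]
        exact pos_of_mul_neg_right (hsign r hr) (hneg r hr).le)
    rw [deriv.neg'] at hM
    exact ⟨-L, -M, by simpa using hL.neg, by simpa using hM.neg⟩
  · exact exists_tendsto_nhdsLT_of_deriv_pos_of_deriv2_neg hab hf hf' hpos
      fun r hr => neg_of_mul_neg_right (hsign r hr) (hpos r hr).le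

end Limits

section Continuation

variable {E : Type*} [NormedAddCommGroup E] [NormedSpace ℝ E] {V : E → E} {γ g : ℝ → E} {a b : ℝ}

lemma hasDerivWithinAt_Iic_of_tendsto_nhdsLT (hab : a < b)
    (hγ : ∀ t ∈ Ioo a b, HasDerivAt γ (V (γ t)) t) (hg : EqOn g γ (Ioo a b))
    (hlim : Tendsto γ (𝓝[<] b) (𝓝 (g b))) (hV : ContinuousAt V (g b)) :
    HasDerivWithinAt g (V (g b)) (Iic b) b := by
  have hg' : ∀ t ∈ Ioo a b, HasDerivAt g (V (γ t)) t := fun t ht =>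
    (hγ t ht).congr_of_eventuallyEq (eventually_of_mem (isOpen_Ioo.mem_nhds ht) hg)
  have hs : Ioo a b ∈ 𝓝[<] b := Ioo_mem_nhdsLT hab
  refine hasDerivWithinAt_Iic_of_tendsto_deriv (s := Ioo a b)
    (fun t ht => (hg' t ht).differentiableAt.differentiableWithinAt)
    ((hlim.mono_left (nhdsWithin_mono b Ioo_subset_Iio_self)).congr' ?_) hs
    ((hV.tendsto.comp hlim).congr' ?_)
  · exact eventually_of_mem self_mem_nhdsWithin fun t ht => (hg ht).symm
  · filter_upwards [hs] with t ht
    exact (hg' t ht).deriv.symm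

lemma exists_lt_eqOn_Icc_of_hasDerivWithinAt_Iic {α : ℝ → E} {K : NNReal} {s : Set E}
    (hK : LipschitzOnWith K V s) (hs : s ∈ 𝓝 (g b))
    (hg : ∀ᶠ t in 𝓝[<] b, HasDerivAt g (V (g t)) t) (hgb : HasDerivWithinAt g (V (g b)) (Iic b) b)
    (hα : ∀ᶠ t in 𝓝 b, HasDerivAt α (V (α t)) t) (hαb : α b = g b) :
    ∃ t₀ < b, EqOn g α (Icc t₀ b) := by
  have hnear : ∀ᶠ t in 𝓝[<] b,
      HasDerivAt g (V (g t)) t ∧ HasDerivAt α (V (α t)) t ∧ g t ∈ s ∧ α t ∈ s :=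
    hg.and <| Eventually.and (nhdsWithin_le_nhds hα) <|
      Eventually.and ((hgb.continuousWithinAt.mono Iio_subset_Iic_self).eventually_mem hs) <|
        nhdsWithin_le_nhds <| hα.self_of_nhds.continuousAt.eventually_mem (hαb ▸ hs)
  obtain ⟨t₁, ht₁b, ht₁⟩ := mem_nhdsLT_iff_exists_Ioo_subset.1 hnear
  obtain ⟨t₀, ht₁₀, ht₀b⟩ := exists_between (mem_Iio.1 ht₁b)
  have hmem : ∀ t ∈ Ico t₀ b,
      HasDerivAt g (V (g t)) t ∧ HasDerivAt α (V (α t)) t ∧ g t ∈ s ∧ α t ∈ s :=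
    fun t ht => ht₁ ⟨ht₁₀.trans_le ht.1, ht.2⟩
  have hαIcc : ∀ t ∈ Icc t₀ b, HasDerivAt α (V (α t)) t := fun t ht => by
    rcases ht.2.lt_or_eq with htb | rfl
    exacts [(hmem t ⟨ht.1, htb⟩).2.1, hα.self_of_nhds]
  refine ⟨t₀, ht₀b, ODE_solution_unique_of_mem_Icc_left (v := fun _ => V) (s := fun _ => s)
    (fun _ _ => hK) (fun t ht => ?_) (fun t ht => ?_) (fun t ht => ?_)
    (fun t ht => (hαIcc t ht).continuousAt.continuousWithinAt)
    (fun t ht => (hαIcc t (Ioc_subset_Icc_self ht)).hasDerivWithinAt) (fun t ht => ?_) hαb.symm⟩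
  · rcases ht.2.lt_or_eq with htb | rfl
    · exact (hmem t ⟨ht.1, htb⟩).1.continuousAt.continuousWithinAt
    · exact hgb.continuousWithinAt.mono Icc_subset_Iic_self
  · rcases ht.2.lt_or_eq with htb | rfl
    exacts [(hmem t ⟨ht.1.le, htb⟩).1.hasDerivWithinAt, hgb]
  · rcases ht.2.lt_or_eq with htb | rfl
    exacts [(hmem t ⟨ht.1.le, htb⟩).2.2.1, mem_of_mem_nhds hs]
  · rcases ht.2.lt_or_eq with htb | rfl
    exacts [(hmem t ⟨ht.1.le, htb⟩).2.2.2, hαb ▸ mem_of_mem_nhds hs]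

theorem exists_gt_exists_hasDerivAt_extension [CompleteSpace E] {x₀ : E}
    (hV : ContDiffAt ℝ 1 V x₀) (hab : a < b)
    (hγ : ∀ t ∈ Ioo a b, HasDerivAt γ (V (γ t)) t) (hlim : Tendsto γ (𝓝[<] b) (𝓝 x₀)) :
    ∃ b' > b, ∃ γ' : ℝ → E, (∀ t ∈ Ioo a b', HasDerivAt γ' (V (γ' t)) t) ∧
      EqOn γ' γ (Ioo a b) := by
  obtain ⟨α, hα₀, ε, hε, hα⟩ :=
    hV.exists_forall_mem_closedBall_exists_eq_forall_mem_Ioo_hasDerivAt₀ b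
  obtain ⟨K, s, hs, hK⟩ := hV.exists_lipschitzOnWith
  set γ' : ℝ → E := fun t => if t < b then γ t else α t with hγ'_def
  have hγ'γ : EqOn γ' γ (Ioo a b) := fun t ht => if_pos ht.2
  have hγ'b : γ' b = x₀ := by simp [hγ'_def, hα₀]
  have hγ' : ∀ t ∈ Ioo a b, HasDerivAt γ' (V (γ' t)) t := fun t ht => by
    rw [hγ'γ ht]
    exact (hγ t ht).congr_of_eventuallyEq (eventually_of_mem (isOpen_Ioo.mem_nhds ht) hγ'γ)
  have hbε : Ioo (b - ε) (b + ε) ∈ 𝓝 b := Ioo_mem_nhds (by linarith) (by linarith)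
  obtain ⟨t₀, ht₀b, heq⟩ := exists_lt_eqOn_Icc_of_hasDerivWithinAt_Iic hK (hγ'b ▸ hs)
    (eventually_of_mem (Ioo_mem_nhdsLT hab) hγ')
    (hasDerivWithinAt_Iic_of_tendsto_nhdsLT hab hγ hγ'γ (hγ'b ▸ hlim) (hγ'b ▸ hV.continuousAt))
    (eventually_of_mem hbε hα) (hα₀.trans hγ'b.symm)
  have hγ'α : EqOn γ' α (Ioo t₀ (b + ε)) := fun t ht => by
    rcases lt_or_ge t b with htb | hbt
    · exact heq ⟨ht.1.le, htb.le⟩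
    · simp [hγ'_def, not_lt.2 hbt]
  refine ⟨b + ε, by linarith, γ', fun t ht => ?_, hγ'γ⟩
  rcases lt_or_ge t b with htb | hbt
  · exact hγ' t ⟨ht.1, htb⟩
  · have htI : t ∈ Ioo t₀ (b + ε) := ⟨ht₀b.trans_le hbt, ht.2⟩
    rw [hγ'α htI]
    exact (hα t ⟨by linarith, ht.2⟩).congr_of_eventuallyEq
      (eventually_of_mem (isOpen_Ioo.mem_nhds htI) hγ'α)

end Continuation

section ProdDeriv

variable {𝕜 : Type*} [NontriviallyNormedField 𝕜] {F G : Type*} [NormedAddCommGroup F]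
  [NormedSpace 𝕜 F] [NormedAddCommGroup G] [NormedSpace 𝕜 G] {c : 𝕜 → F × G} {v : F × G} {t : 𝕜}

protected lemma HasDerivAt.fst (h : HasDerivAt c v t) : HasDerivAt (fun s => (c s).1) v.1 t :=
  HasFDerivAt.fst h

protected lemma HasDerivAt.snd (h : HasDerivAt c v t) : HasDerivAt (fun s => (c s).2) v.2 t :=
  HasFDerivAt.snd h

end ProdDeriv

/-- The profile equation as an autonomous first-order system in `(r, f, f')`. -/
noncomputable def profileField (n : ℕ) (lam : ℝ) (X : ℝ × ℝ × ℝ) : ℝ × ℝ × ℝ :=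
  (1, X.2.2, (1 + X.2.2 ^ 2) *
    ((X.1 - ((n : ℝ) - 1) / X.1) * X.2.2 - X.2.1 - lam * Real.sqrt (1 + X.2.2 ^ 2)))

section Profile

variable {n : ℕ} {lam a b : ℝ}

lemma profileField_contDiffAt {X : ℝ × ℝ × ℝ} (hX : X.1 ≠ 0) :
    ContDiffAt ℝ 1 (profileField n lam) X := by
  have hq : 1 + X.2.2 ^ 2 ≠ 0 := by positivity
  unfold profileField
  fun_prop (disch := assumption)

lemma IsProfileSol.hasDerivAt_profileField {f : ℝ → ℝ} (hf : IsProfileSol n lam a b f)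
    {t : ℝ} (ht : t ∈ Ioo a b) :
    HasDerivAt (fun s => (s, f s, deriv f s)) (profileField n lam (t, f t, deriv f t)) t := by
  have hq : 1 + deriv f t ^ 2 ≠ 0 := by positivity
  have hf'' := (div_eq_iff hq).1 (hf.2 t ht)
  have hV : profileField n lam (t, f t, deriv f t) = (1, deriv f t, deriv (deriv f) t) := by
    simp only [profileField, hf'', Prod.mk.injEq, true_and]
    ring
  exact hV ▸ (hasDerivAt_id t).prodMk ((hf.1 t ht).1.hasDerivAt.prodMk (hf.1 t ht).2.hasDerivAt)

lemma fst_eqOn_of_hasDerivAt_profileField {γ : ℝ → ℝ × ℝ × ℝ}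
    (hγ : ∀ t ∈ Ioo a b, HasDerivAt γ (profileField n lam (γ t)) t) {t₀ : ℝ}
    (ht₀ : t₀ ∈ Ioo a b) (hγt₀ : (γ t₀).1 = t₀) : EqOn (fun t => (γ t).1) id (Ioo a b) :=
  isOpen_Ioo.eqOn_of_deriv_eq isPreconnected_Ioo
    (fun t ht => (hγ t ht).fst.differentiableAt.differentiableWithinAt)
    differentiableOn_id (fun t ht => by simp [(hγ t ht).fst.deriv, profileField]) ht₀ hγt₀

lemma isProfileSol_of_hasDerivAt_profileField {γ : ℝ → ℝ × ℝ × ℝ}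
    (hγ : ∀ t ∈ Ioo a b, HasDerivAt γ (profileField n lam (γ t)) t)
    (hfst : ∀ t ∈ Ioo a b, (γ t).1 = t) : IsProfileSol n lam a b (fun t => (γ t).2.1) := by
  have h₁ : ∀ t ∈ Ioo a b, HasDerivAt (fun s => (γ s).2.1) (γ t).2.2 t :=
    fun t ht => (hγ t ht).snd.fst
  have h₁' : EqOn (deriv fun s => (γ s).2.1) (fun s => (γ s).2.2) (Ioo a b) :=
    fun t ht => (h₁ t ht).deriv
  have h₂ : ∀ t ∈ Ioo a b, HasDerivAt (deriv fun s => (γ s).2.1)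
      (profileField n lam (γ t)).2.2 t := fun t ht =>
    (hγ t ht).snd.snd.congr_of_eventuallyEq (eventually_of_mem (isOpen_Ioo.mem_nhds ht) h₁')
  refine ⟨fun t ht => ⟨(h₁ t ht).differentiableAt, (h₂ t ht).differentiableAt⟩, fun t ht => ?_⟩
  have hq : 1 + (γ t).2.2 ^ 2 ≠ 0 := by positivity
  rw [(h₂ t ht).deriv, h₁' ht, profileField, hfst t ht, mul_div_cancel_left₀ _ hq]

end Profile

theorem stmt_10_general (n : ℕ) (lam a b : ℝ)
    (ha : 0 ≤ a) (hab : a < b)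
    (f : ℝ → ℝ)
    (hsol : IsProfileSol n lam a b f)
    (hmax : ∀ b' : ℝ, b < b' →
      ¬ ∃ g : ℝ → ℝ, IsProfileSol n lam a b' g ∧ Set.EqOn g f (Set.Ioo a b))
    (hsign : ∀ r ∈ Set.Ioo a b, deriv f r * deriv (deriv f) r < 0) :
    False := by
  obtain ⟨L, M, hL, hM⟩ := exists_tendsto_nhdsLT_of_deriv_mul_deriv2_neg hab
    (fun r hr => (hsol.1 r hr).1) (fun r hr => (hsol.1 r hr).2) hsign
  have hlim : Tendsto (fun s => (s, f s, deriv f s)) (𝓝[<] b) (𝓝 (b, L, M)) :=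
    (tendsto_id.mono_left nhdsWithin_le_nhds).prodMk_nhds (hL.prodMk_nhds hM)
  obtain ⟨b', hbb', γ, hγ, hγf⟩ := exists_gt_exists_hasDerivAt_extension
    (profileField_contDiffAt (n := n) (lam := lam) (ha.trans_lt hab).ne') hab
    (fun t ht => hsol.hasDerivAt_profileField ht) hlim
  obtain ⟨t₀, ht₀⟩ := nonempty_Ioo.2 hab
  have hfst := fst_eqOn_of_hasDerivAt_profileField hγ (Ioo_subset_Ioo_right hbb'.le ht₀)
    (by simp [hγf ht₀])
  exact hmax b' hbb'
    ⟨_, isProfileSol_of_hasDerivAt_profileField hγ hfst, fun t ht => by simp [hγf ht]⟩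

/-- A right maximally extended solution with `f'·f'' < 0` on `(a,b) ⊂ (0,∞)` must have
`b = ∞`; i.e. there is no such solution with a finite right endpoint `b`. -/
theorem stmt_10 (n : ℕ) (hn : 2 ≤ n) (lam a b : ℝ)
    (ha : 0 ≤ a) (hab : a < b)
    (f : ℝ → ℝ)
    (hsol : IsProfileSol n lam a b f)
    (hmax : ∀ b' : ℝ, b < b' →
      ¬ ∃ g : ℝ → ℝ, IsProfileSol n lam a b' g ∧ Set.EqOn g f (Set.Ioo a b))
    (hsign : ∀ r ∈ Set.Ioo a b, deriv f r * deriv (deriv f) r < 0) :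
    False :=
  stmt_10_general n lam a b ha hab f hsol hmax hsign
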